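/- Let p ∈ (0, 1/2], α₀ := (1−p)/2, β₀ := p/2, and let π be the pmf on {0,1} × {0,1} with π(x,y) = α₀ if x = y and π(x,y) = β₀ if x ≠ y; its marginals π_X and π_Y are both uniform on {0,1}. Then 𝓗(π_X, π_Y ‖ π) = log(1/β₀), and H(π) = 2α₀ log(1/α₀) + 2β₀ log(1/β₀) ≤ log(1/β₀), with equality in the latter inequality if and only if p = 1/2. -/

import Mathlib

/-! The maximal cross-entropy is at most `log (1 / min π)`, and the coupling that puts all its
mass on the anti-diagonal, where `π = β₀`, attains it. The entropy gap is
`log (1/β₀) - H(π) = (1 - p) log ((1 - p) / p)`, which is nonnegative for `p ≤ 1/2` and vanishes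
exactly when `(1 - p) / p = 1`. -/

open scoped BigOperators

noncomputable def negLogE (t : ℝ) : EReal :=
  if t = 0 then (⊤ : EReal) else ((Real.log t⁻¹ : ℝ) : EReal)

def IsCoupling {X Y : Type*} [Fintype X] [Fintype Y]
    (PX : X → ℝ) (PY : Y → ℝ) (Q : X × Y → ℝ) : Prop :=
  (∀ p, 0 ≤ Q p) ∧ (∀ x, ∑ y, Q (x, y) = PX x) ∧ (∀ y, ∑ x, Q (x, y) = PY y)

noncomputable def maxCrossEnt {X Y : Type*} [Fintype X] [Fintype Y]
    (PX : X → ℝ) (PY : Y → ℝ) (π : X × Y → ℝ) : EReal :=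
  sSup {s : EReal | ∃ Q, IsCoupling PX PY Q ∧
    s = ∑ p : X × Y, (Q p : EReal) * negLogE (π p)}

noncomputable def entropy {X : Type*} [Fintype X] (P : X → ℝ) : ℝ :=
  ∑ x, P x * Real.log (P x)⁻¹

lemma EReal.coe_finset_sum {ι : Type*} (s : Finset ι) (f : ι → ℝ) :
    ((∑ i ∈ s, f i : ℝ) : EReal) = ∑ i ∈ s, ((f i : ℝ) : EReal) :=
  map_sum (⟨⟨Real.toEReal, EReal.coe_zero⟩, EReal.coe_add⟩ : ℝ →+ EReal) f s

lemma negLogE_of_ne_zero {t : ℝ} (ht : t ≠ 0) : negLogE t = ((Real.log t⁻¹ : ℝ) : EReal) :=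
  if_neg ht

lemma sum_mul_negLogE_of_ne_zero {ι : Type*} [Fintype ι] {π : ι → ℝ} (hπ : ∀ i, π i ≠ 0)
    (Q : ι → ℝ) :
    ∑ i, (Q i : EReal) * negLogE (π i) = ((∑ i, Q i * Real.log (π i)⁻¹ : ℝ) : EReal) := by
  simp only [EReal.coe_finset_sum, EReal.coe_mul, negLogE_of_ne_zero (hπ _)]

lemma IsCoupling.sum_eq {X Y : Type*} [Fintype X] [Fintype Y] {PX : X → ℝ} {PY : Y → ℝ}
    {Q : X × Y → ℝ} (hQ : IsCoupling PX PY Q) : ∑ q, Q q = ∑ x, PX x := by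
  rw [Fintype.sum_prod_type]
  exact Finset.sum_congr rfl fun x _ => hQ.2.1 x

theorem maxCrossEnt_eq_log_inv_of_le {X Y : Type*} [Fintype X] [Fintype Y]
    {PX : X → ℝ} {PY : Y → ℝ} {π : X × Y → ℝ} {m : ℝ} (hm : 0 < m) (hπ : ∀ q, m ≤ π q)
    (hPX : ∑ x, PX x = 1) {Q₀ : X × Y → ℝ} (hQ₀ : IsCoupling PX PY Q₀)
    (hQ₀π : ∀ q, Q₀ q ≠ 0 → π q = m) :
    maxCrossEnt PX PY π = ((Real.log m⁻¹ : ℝ) : EReal) := by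
  have hπpos : ∀ q, 0 < π q := fun q => hm.trans_le (hπ q)
  have hπ0 : ∀ q, π q ≠ 0 := fun q => (hπpos q).ne'
  apply le_antisymm
  · refine sSup_le ?_
    rintro s ⟨Q, hQ, rfl⟩
    rw [sum_mul_negLogE_of_ne_zero hπ0, EReal.coe_le_coe_iff]
    calc ∑ q, Q q * Real.log (π q)⁻¹
        ≤ ∑ q, Q q * Real.log m⁻¹ := Finset.sum_le_sum fun q _ =>
          mul_le_mul_of_nonneg_left
            (Real.log_le_log (inv_pos.2 (hπpos q)) (inv_anti₀ hm (hπ q))) (hQ.1 q)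
      _ = Real.log m⁻¹ := by rw [← Finset.sum_mul, hQ.sum_eq, hPX, one_mul]
  · refine le_sSup ⟨Q₀, hQ₀, ?_⟩
    rw [sum_mul_negLogE_of_ne_zero hπ0, EReal.coe_eq_coe_iff]
    calc Real.log m⁻¹ = ∑ q, Q₀ q * Real.log m⁻¹ := by
          rw [← Finset.sum_mul, hQ₀.sum_eq, hPX, one_mul]
      _ = ∑ q, Q₀ q * Real.log (π q)⁻¹ := Finset.sum_congr rfl fun q _ => by
          by_cases h : Q₀ q = 0
          · rw [h, zero_mul, zero_mul]
          · rw [hQ₀π q h]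

section DSBS

/-- The doubly symmetric binary source with crossover probability `p`. -/
noncomputable def dsbs (p : ℝ) : Fin 2 × Fin 2 → ℝ :=
  fun q => if q.1 = q.2 then (1 - p) / 2 else p / 2

variable {p : ℝ}

lemma sum_dsbs_fst (p : ℝ) (x : Fin 2) : ∑ y, dsbs p (x, y) = 1 / 2 := by
  fin_cases x <;>
    simp only [dsbs, Fin.sum_univ_two, Fin.isValue, Fin.zero_eta, Fin.mk_one, ↓reduceIte,
      zero_ne_one, one_ne_zero] <;>
    ring

lemma sum_dsbs_snd (p : ℝ) (y : Fin 2) : ∑ x, dsbs p (x, y) = 1 / 2 := by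
  fin_cases y <;>
    simp only [dsbs, Fin.sum_univ_two, Fin.isValue, Fin.zero_eta, Fin.mk_one, ↓reduceIte,
      zero_ne_one, one_ne_zero] <;>
    ring

lemma isCoupling_dsbs_antidiagonal (p : ℝ) :
    IsCoupling (fun x => ∑ y, dsbs p (x, y)) (fun y => ∑ x, dsbs p (x, y))
      (fun q => if q.1 = q.2 then 0 else 1 / 2) := by
  refine ⟨fun q => by positivity, fun x => ?_, fun y => ?_⟩
  · simp only [sum_dsbs_fst]; fin_cases x <;> simp [Fin.sum_univ_two]
  · simp only [sum_dsbs_snd]; fin_cases y <;> simp [Fin.sum_univ_two]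

theorem maxCrossEnt_dsbs (hp0 : 0 < p) (hp2 : p ≤ 1 / 2) :
    maxCrossEnt (fun x => ∑ y, dsbs p (x, y)) (fun y => ∑ x, dsbs p (x, y)) (dsbs p)
      = ((Real.log (p / 2)⁻¹ : ℝ) : EReal) := by
  refine maxCrossEnt_eq_log_inv_of_le (by positivity) (fun q => ?_) ?_
    (isCoupling_dsbs_antidiagonal p) (fun q hq => ?_)
  · unfold dsbs; split_ifs <;> linarith
  · simp only [sum_dsbs_fst, Finset.sum_const, Finset.card_univ, Fintype.card_fin]; norm_num
  · unfold dsbs; split_ifs at hq ⊢ <;> simp_all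

theorem entropy_dsbs (p : ℝ) :
    entropy (dsbs p)
      = 2 * ((1 - p) / 2) * Real.log ((1 - p) / 2)⁻¹ + 2 * (p / 2) * Real.log (p / 2)⁻¹ := by
  simp only [entropy, dsbs, Fintype.sum_prod_type, Fin.sum_univ_two, Fin.isValue, ↓reduceIte,
    zero_ne_one, one_ne_zero]
  ring

lemma log_inv_sub_entropy_dsbs (hp0 : 0 < p) (hp1 : p < 1) :
    Real.log (p / 2)⁻¹
        - (2 * ((1 - p) / 2) * Real.log ((1 - p) / 2)⁻¹ + 2 * (p / 2) * Real.log (p / 2)⁻¹)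
      = (1 - p) * Real.log ((1 - p) / p) := by
  have h1p : 1 - p ≠ 0 := by linarith
  simp only [Real.log_inv, Real.log_div h1p hp0.ne', Real.log_div hp0.ne' two_ne_zero,
    Real.log_div h1p two_ne_zero]
  ring

lemma mul_log_one_sub_div_nonneg (hp0 : 0 < p) (hp2 : p ≤ 1 / 2) :
    0 ≤ (1 - p) * Real.log ((1 - p) / p) :=
  mul_nonneg (by linarith) (Real.log_nonneg ((one_le_div hp0).2 (by linarith)))

lemma mul_log_one_sub_div_eq_zero_iff (hp0 : 0 < p) (hp1 : p < 1) :
    (1 - p) * Real.log ((1 - p) / p) = 0 ↔ p = 1 / 2 := by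
  have hdiv : 0 < (1 - p) / p := div_pos (by linarith) hp0
  rw [mul_eq_zero, or_iff_right (by linarith), Real.log_eq_zero,
    or_iff_right hdiv.ne', or_iff_left (by linarith), div_eq_one_iff_eq hp0.ne']
  constructor <;> intro h <;> linarith

end DSBS

/-- for the DSBS `π`, `𝓗(π_X, π_Y ‖ π) = log(1/β₀)`,
`H(π) = 2α₀ log(1/α₀) + 2β₀ log(1/β₀) ≤ log(1/β₀)`, with equality iff `p = 1/2`. -/
theorem stmt_5 (p : ℝ) (hp0 : 0 < p) (hp2 : p ≤ 1 / 2) :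
    maxCrossEnt
        (fun x : Fin 2 => ∑ y : Fin 2,
          (fun q : Fin 2 × Fin 2 => if q.1 = q.2 then (1 - p) / 2 else p / 2) (x, y))
        (fun y : Fin 2 => ∑ x : Fin 2,
          (fun q : Fin 2 × Fin 2 => if q.1 = q.2 then (1 - p) / 2 else p / 2) (x, y))
        (fun q : Fin 2 × Fin 2 => if q.1 = q.2 then (1 - p) / 2 else p / 2)
      = ((Real.log (p / 2)⁻¹ : ℝ) : EReal) ∧
    entropy (fun q : Fin 2 × Fin 2 => if q.1 = q.2 then (1 - p) / 2 else p / 2)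
      = 2 * ((1 - p) / 2) * Real.log ((1 - p) / 2)⁻¹ + 2 * (p / 2) * Real.log (p / 2)⁻¹ ∧
    2 * ((1 - p) / 2) * Real.log ((1 - p) / 2)⁻¹ + 2 * (p / 2) * Real.log (p / 2)⁻¹
      ≤ Real.log (p / 2)⁻¹ ∧
    (2 * ((1 - p) / 2) * Real.log ((1 - p) / 2)⁻¹ + 2 * (p / 2) * Real.log (p / 2)⁻¹
        = Real.log (p / 2)⁻¹ ↔ p = 1 / 2) := by
  have hp1 : p < 1 := by linarith
  have hgap := log_inv_sub_entropy_dsbs hp0 hp1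
  refine ⟨maxCrossEnt_dsbs hp0 hp2, entropy_dsbs p, ?_, ?_⟩
  · rw [← sub_nonneg, hgap]
    exact mul_log_one_sub_div_nonneg hp0 hp2
  · rw [eq_comm, ← sub_eq_zero, hgap]
    exact mul_log_one_sub_div_eq_zero_iff hp0 hp1
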